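/- If r* < d, then G is injective on the closed half-plane {ξ ∈ ℂ : Im ξ ≤ r*}. -/

import Mathlib

/-- `G(ξ) = ξ + (i/k) e^{−kd} e^{ik ξ̄}`, encoding the (x,z)-components of the
time-0 Lagrangian flow map at a fixed latitude. -/
noncomputable def G (k d : ℝ) (ξ : ℂ) : ℂ :=
  ξ + (Complex.I / (k : ℂ)) * (Real.exp (-(k * d)) : ℂ) *
      Complex.exp (Complex.I * (k : ℂ) * (starRingEnd ℂ ξ))

/-- if `r* < d`, then `G` is injective on the closed half-plane
`{ξ : Im ξ ≤ r*}`. -/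
theorem stmt4 (k d : ℝ) (hk : 0 < k) (hd : 0 ≤ d)
    (rstar : ℝ) (hr : rstar < d) :
    Set.InjOn (G k d) {ξ : ℂ | ξ.im ≤ rstar} := by
  set S : Set ℂ := {ξ : ℂ | ξ.im ≤ rstar} with hS
  have hconv : Convex ℝ S := convex_halfSpace_im_le (r := rstar)
  set f : ℂ → ℂ := fun w => Complex.exp (-(Complex.I * (k : ℂ)) * w) with hf
  set C : ℝ := k * Real.exp (k * rstar) with hC
  have hderiv : ∀ w ∈ S, HasDerivWithinAt f
      (-(Complex.I * (k : ℂ)) * Complex.exp (-(Complex.I * (k : ℂ)) * w)) S w := by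
    intro w hw
    have := ((Complex.hasDerivAt_exp _).comp w
      ((hasDerivAt_id w).const_mul (-(Complex.I * (k : ℂ))))).hasDerivWithinAt (s := S)
    simpa [hf, Function.comp_def, mul_comm] using this
  have hbound : ∀ w ∈ S, ‖-(Complex.I * (k : ℂ)) * Complex.exp (-(Complex.I * (k : ℂ)) * w)‖ ≤ C := by
    intro w hw
    have him : (-(Complex.I * (k : ℂ)) * w).re = k * w.im := by
      simp [Complex.mul_re]
    rw [norm_mul, Complex.norm_exp, him, norm_neg, norm_mul, Complex.norm_I, one_mul,
      Complex.norm_real, Real.norm_eq_abs, abs_of_pos hk, hC]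
    have : Real.exp (k * w.im) ≤ Real.exp (k * rstar) :=
      Real.exp_le_exp.mpr (by nlinarith [hw.out])
    nlinarith
  have hlip : ∀ x ∈ S, ∀ y ∈ S, ‖f y - f x‖ ≤ C * ‖y - x‖ := fun x hx y hy =>
    hconv.norm_image_sub_le_of_norm_hasDerivWithin_le hderiv hbound hx hy
  intro x hx y hy hxy
  -- rewrite exp(I k conj ξ) = conj (f ξ)
  have key : ∀ ξ : ℂ, Complex.exp (Complex.I * (k : ℂ) * (starRingEnd ℂ ξ))
      = starRingEnd ℂ (f ξ) := by
    intro ξ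
    rw [hf]
    rw [← Complex.exp_conj]
    congr 1
    simp only [map_neg, map_mul, Complex.conj_I, Complex.conj_ofReal]
    ring
  have heq : x - y = (Complex.I / (k : ℂ)) * (Real.exp (-(k * d)) : ℂ) *
      (starRingEnd ℂ (f y) - starRingEnd ℂ (f x)) := by
    have := hxy
    unfold G at this
    rw [key x, key y] at this
    linear_combination this
  have hknorm : ‖(Complex.I / (k : ℂ)) * (Real.exp (-(k * d)) : ℂ)‖
      = Real.exp (-(k * d)) / k := by
    rw [norm_mul, norm_div, Complex.norm_I, Complex.norm_real, Complex.norm_real,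
      Real.norm_eq_abs, Real.norm_eq_abs, abs_of_pos hk, abs_of_pos (Real.exp_pos _)]
    ring
  have hnorm : ‖x - y‖ ≤ (Real.exp (-(k * d)) / k) * (C * ‖y - x‖) := by
    calc ‖x - y‖ = ‖(Complex.I / (k : ℂ)) * (Real.exp (-(k * d)) : ℂ)‖ *
        ‖starRingEnd ℂ (f y) - starRingEnd ℂ (f x)‖ := by rw [heq, norm_mul]
      _ = (Real.exp (-(k * d)) / k) * ‖f y - f x‖ := by
          rw [hknorm, ← map_sub, RCLike.norm_conj]
      _ ≤ (Real.exp (-(k * d)) / k) * (C * ‖y - x‖) := by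
          apply mul_le_mul_of_nonneg_left (hlip x hx y hy)
          positivity
  have hfac : (Real.exp (-(k * d)) / k) * C = Real.exp (k * (rstar - d)) := by
    have h2 : Real.exp (-(k * d)) / k * (k * Real.exp (k * rstar))
        = Real.exp (-(k * d)) * Real.exp (k * rstar) := by field_simp
    rw [hC, h2, ← Real.exp_add]
    ring_nf
  have hfac1 : Real.exp (k * (rstar - d)) < 1 := by
    rw [Real.exp_lt_one_iff]
    nlinarith
  have hyx : ‖y - x‖ = ‖x - y‖ := by rw [norm_sub_rev]
  rw [hyx, ← mul_assoc, hfac] at hnorm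
  have : ‖x - y‖ = 0 := by nlinarith [norm_nonneg (x - y)]
  have := sub_eq_zero.mp (norm_eq_zero.mp this)
  exact this
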